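/- arXiv:2403.18574 — 2 statements merged into one kernel-verified Lean document; each statement's English description precedes it below -/
import Mathlib

section
/- The operator ∂ : F → F is two-to-one: it restricts to a bijection from A := {f ∈ F : 1 ∉ R(f)} onto F with inverse α, and to a bijection from B := {f ∈ F : 1 ∈ R(f)} onto F with inverse β. In particular ∂(α(f)) = f and ∂(β(f)) = f for all f ∈ F. -/
open scoped Classical

noncomputable section

/-- `f` is a frequency sequence: `f 0 = 0` and finite support. -/
def IsFreq (f : ℕ → ℕ) : Prop := f 0 = 0 ∧ (Function.support f).Finite

/-- size `|f| = ∑ i·f i`. -/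
def fsize (f : ℕ → ℕ) : ℕ := ∑ᶠ n, n * f n

/-- length `ℓ(f) = ∑ f i`. -/
def flen (f : ℕ → ℕ) : ℕ := ∑ᶠ n, f n

/-- the support `S(f)`. -/
def suppF (f : ℕ → ℕ) : Set ℕ := {i | 1 ≤ i ∧ f i ≠ 0}

/-- `[i,j]` is a spread of `f`: a maximal interval contained in the support. -/
def IsSpread (f : ℕ → ℕ) (i j : ℕ) : Prop :=
  1 ≤ i ∧ i ≤ j ∧ (∀ k, i ≤ k → k ≤ j → f k ≠ 0) ∧ (i = 1 ∨ f (i - 1) = 0) ∧ f (j + 1) = 0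

/-- `L(f)`: every other element of each spread, starting from the left end. -/
def Lset (f : ℕ → ℕ) : Set ℕ :=
  {q | ∃ i j, IsSpread f i j ∧ i ≤ q ∧ q ≤ j ∧ (q - i) % 2 = 0}

/-- `R(f)`: every other element of each spread, starting from the right end. -/
def Rset (f : ℕ → ℕ) : Set ℕ :=
  {q | ∃ i j, IsSpread f i j ∧ i ≤ q ∧ q ≤ j ∧ (j - q) % 2 = 0}

/-- the 2-measure, as the cardinality of `R(f)`. -/
def mu2 (f : ℕ → ℕ) : ℕ := (Rset f).ncard

/-- The Burge demotion operator `∂`. -/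
def dB (f : ℕ → ℕ) : ℕ → ℕ := fun n =>
  if n = 0 then 0
  else f n - (if n ∈ Rset f then 1 else 0) + (if n + 1 ∈ Rset f then 1 else 0)

/-- The promotion operator `α`. -/
def aB (f : ℕ → ℕ) : ℕ → ℕ := fun n =>
  if n = 0 then 0
  else f n - (if n ∈ Lset f then 1 else 0) + (if n - 1 ∈ Lset f then 1 else 0)

/-- the shift `(f₂, f₃, …)`; on partitions this is `P ↦ P - 1`. -/
def tailF (f : ℕ → ℕ) : ℕ → ℕ := fun n => if n = 0 then 0 else f (n + 1)

/-- The operator `β`: `β(f) = (f₁ + 1, α(f₂, f₃, …))`. -/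
def bB (f : ℕ → ℕ) : ℕ → ℕ := fun n =>
  if n = 0 then 0 else if n = 1 then f 1 + 1 else aB (tailF f) (n - 1)

/-- the zero sequence (empty partition). -/
def zeroF : ℕ → ℕ := fun _ => 0

/-- `k` minimal with `∂^[k] f = 0`. -/
def chainK (f : ℕ → ℕ) : ℕ :=
  if h : ∃ m, dB^[m] f = zeroF then Nat.find h else 0

/-- The Burge code of `f`, as a list of letters; `false` = `a`, `true` = `b`.
The `i`-th letter (0-indexed `i`) records whether `∂^[i] f ∈ B`, i.e. `1 ∈ R(∂^[i] f)`. -/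
def burgeCode (f : ℕ → ℕ) : List Bool :=
  (List.range (chainK f + 1)).map fun i => if 1 ∈ Rset (dB^[i] f) then true else false

/-- descent set of a word: 1-indexed positions `i` with `ωᵢ = b`, `ω_{i+1} = a`. -/
def descSet (w : List Bool) : Set ℕ :=
  {i | 1 ≤ i ∧ w[i - 1]? = some true ∧ w[i]? = some false}

/-- the descent set of (the Burge code of) a partition. -/
def DesSet (f : ℕ → ℕ) : Set ℕ := descSet (burgeCode f)

/-- `Des(P)` regarded as a partition, via its frequency sequence. -/
def desFreq (f : ℕ → ℕ) : ℕ → ℕ := fun i => if i ∈ DesSet f then 1 else 0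

/-- the 2-measure as the maximal size of a subset of the support without
consecutive pairs. -/
def twoMeasure (f : ℕ → ℕ) : ℕ :=
  sSup {n | ∃ T : Finset ℕ, (↑T : Set ℕ) ⊆ suppF f ∧ (∀ x ∈ T, x + 1 ∉ T) ∧ T.card = n}

/-- evaluation at `i`: `ν_i(f) = i f_i + (i+1) f_{i+1} + 2 ∑_{j>i+1} f_j`, with `ν₀ = ν₁`. -/
def nuI (f : ℕ → ℕ) (i : ℕ) : ℕ :=
  (max i 1) * f (max i 1) + (max i 1 + 1) * f (max i 1 + 1)
    + 2 * ∑ᶠ j ∈ {j : ℕ | max i 1 + 1 < j}, f j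

/-- annihilation at `i`: `ρ_i(f) = (f₁, …, f_{i-1}, f_{i+2}, f_{i+3}, …)`, with `ρ₀ = ρ₁`. -/
def rhoI (f : ℕ → ℕ) (i : ℕ) : ℕ → ℕ := fun n =>
  if n = 0 then 0 else if n < max i 1 then f n else f (n + 2)

/-- `i ≥ 1` is right admissible in `f`. -/
def RightAdm (f : ℕ → ℕ) (i : ℕ) : Prop :=
  1 ≤ i ∧ 0 < f i ∧ (0 < f (i + 1) ∨ (f (i - 1) = 0 ∧ f (i + 1) = 0))

/-- `i ≥ 0` is left admissible in `f`. -/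
def LeftAdm (f : ℕ → ℕ) (i : ℕ) : Prop :=
  0 < f (i + 1) ∧ (0 < f i ∨ (f i = 0 ∧ f (i + 2) = 0))

/-- `i` is a maximal index for `f`: `ν_i(f)` is nonzero and maximal. -/
def MaxIdx (f : ℕ → ℕ) (i : ℕ) : Prop :=
  nuI f i ≠ 0 ∧ ∀ j, nuI f j ≤ nuI f i

end

/-!
`R(f)` and `L(f)` are the unique solutions of the recursions
`q ∈ R ↔ f q ≠ 0 ∧ q + 1 ∉ R` (solved downwards from beyond the finite support) and
`q + 1 ∈ L ↔ f (q + 1) ≠ 0 ∧ q ∉ L`, `0 ∉ L` (solved upwards). Checking the recursions shows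
`R(α f) = L(f) + 1` and, when `1 ∉ R(f)`, `L(∂ f) = R(f) - 1`; so `∂` moves back exactly the
units that `α` moved, and conversely. The statements about `β` reduce to those about `α`, because
the shift `f ↦ (f₂, f₃, …)` commutes with `∂` and turns `β` into `α`.
-/

open Filter

theorem isFreq_iff_eventually {f : ℕ → ℕ} :
    IsFreq f ↔ f 0 = 0 ∧ ∀ᶠ n in atTop, f n = 0 := by
  rw [IsFreq, ← Nat.cofinite_eq_atTop, eventually_cofinite]
  rfl

section Spreads

variable {f : ℕ → ℕ}

theorem IsSpread.eq_of_mem {i j i' j' k : ℕ} (h : IsSpread f i j) (h' : IsSpread f i' j')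
    (hk : i ≤ k ∧ k ≤ j) (hk' : i' ≤ k ∧ k ≤ j') : i = i' ∧ j = j' := by
  obtain ⟨hi, -, hnz, hl, hr⟩ := h
  obtain ⟨hi', -, hnz', hl', hr'⟩ := h'
  constructor
  · rcases lt_trichotomy i i' with hlt | heq | hlt
    · rcases hl' with h1 | h0
      · omega
      · exact absurd h0 (hnz _ (by omega) (by omega))
    · exact heq
    · rcases hl with h1 | h0
      · omega
      · exact absurd h0 (hnz' _ (by omega) (by omega))
  · rcases lt_trichotomy j j' with hlt | heq | hlt
    · exact absurd hr (hnz' _ (by omega) (by omega))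
    · exact heq
    · exact absurd hr' (hnz _ (by omega) (by omega))

theorem exists_isSpread (hf : IsFreq f) {q : ℕ} (hq : f q ≠ 0) :
    ∃ i j, IsSpread f i j ∧ i ≤ q ∧ q ≤ j := by
  obtain ⟨N, hN⟩ := eventually_atTop.mp (isFreq_iff_eventually.mp hf).2
  have hleft : ∃ s, f (q - s - 1) = 0 := ⟨q, by simpa using hf.1⟩
  have hright : ∃ t, f (q + t + 1) = 0 := ⟨N, hN _ (by omega)⟩
  have hq1 : 1 ≤ q := Nat.one_le_iff_ne_zero.mpr fun h => hq (h ▸ hf.1)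
  have hs : Nat.find hleft < q := by
    by_contra! hge
    exact Nat.find_min hleft (show q - 1 < Nat.find hleft by omega) (by simpa [hq1] using hf.1)
  refine ⟨q - Nat.find hleft, q + Nat.find hright,
    ⟨by omega, by omega, fun k hik hkj => ?_, Or.inr (Nat.find_spec hleft), Nat.find_spec hright⟩,
    by omega, by omega⟩
  rcases lt_trichotomy k q with hlt | rfl | hlt
  · have := Nat.find_min hleft (show q - k - 1 < Nat.find hleft by omega)
    rwa [show q - (q - k - 1) - 1 = k by omega] at this
  · exact hq
  · have := Nat.find_min hright (show k - q - 1 < Nat.find hright by omega)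
    rwa [show q + (k - q - 1) + 1 = k by omega] at this

theorem ne_zero_of_mem_Rset {q : ℕ} (h : q ∈ Rset f) : f q ≠ 0 := by
  obtain ⟨i, j, hs, hiq, hqj, -⟩ := h
  exact hs.2.2.1 q hiq hqj

theorem ne_zero_of_mem_Lset {q : ℕ} (h : q ∈ Lset f) : f q ≠ 0 := by
  obtain ⟨i, j, hs, hiq, hqj, -⟩ := h
  exact hs.2.2.1 q hiq hqj

theorem zero_notMem_Lset : 0 ∉ Lset f := by
  rintro ⟨i, j, hs, hi, -⟩
  exact absurd hs.1 (by omega)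

theorem mem_Rset_iff (hf : IsFreq f) {q : ℕ} :
    q ∈ Rset f ↔ f q ≠ 0 ∧ q + 1 ∉ Rset f := by
  constructor
  · rintro ⟨i, j, hs, hiq, hqj, hpar⟩
    refine ⟨hs.2.2.1 q hiq hqj, ?_⟩
    rintro ⟨i', j', hs', hi', hj', hpar'⟩
    have hqj' : q + 1 ≤ j := by
      by_contra! hj
      exact hs'.2.2.1 (q + 1) hi' hj' (by rw [show q + 1 = j + 1 by omega]; exact hs.2.2.2.2)
    obtain ⟨-, rfl⟩ := hs.eq_of_mem hs' ⟨by omega, hqj'⟩ ⟨hi', hj'⟩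
    omega
  · rintro ⟨hq, hq1⟩
    obtain ⟨i, j, hs, hiq, hqj⟩ := exists_isSpread hf hq
    by_cases hpar : (j - q) % 2 = 0
    · exact ⟨i, j, hs, hiq, hqj, hpar⟩
    · exact absurd ⟨i, j, hs, by omega, by omega, by omega⟩ hq1

theorem succ_mem_Lset_iff (hf : IsFreq f) {q : ℕ} :
    q + 1 ∈ Lset f ↔ f (q + 1) ≠ 0 ∧ q ∉ Lset f := by
  constructor
  · rintro ⟨i, j, hs, hiq, hqj, hpar⟩
    refine ⟨hs.2.2.1 (q + 1) hiq hqj, ?_⟩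
    rintro ⟨i', j', hs', hi', hj', hpar'⟩
    have hiq' : i ≤ q := by
      by_contra! hi
      rcases hs.2.2.2.1 with h1 | h0
      · exact absurd hs'.1 (by omega)
      · exact hs'.2.2.1 q hi' hj' (by rw [show q = i - 1 by omega]; exact h0)
    obtain ⟨rfl, -⟩ := hs.eq_of_mem hs' ⟨hiq', by omega⟩ ⟨hi', hj'⟩
    omega
  · rintro ⟨hq, hq1⟩
    obtain ⟨i, j, hs, hiq, hqj⟩ := exists_isSpread hf hq
    by_cases hpar : (q + 1 - i) % 2 = 0
    · exact ⟨i, j, hs, hiq, hqj, hpar⟩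
    · exact absurd ⟨i, j, hs, by omega, by omega, by omega⟩ hq1

theorem eq_Rset_of_forall_mem_iff (hf : IsFreq f) {S : Set ℕ}
    (hS : ∀ n, n ∈ S ↔ f n ≠ 0 ∧ n + 1 ∉ S) : S = Rset f := by
  obtain ⟨N, hN⟩ := eventually_atTop.mp (isFreq_iff_eventually.mp hf).2
  suffices h : ∀ d n, N ≤ n + d → (n ∈ S ↔ n ∈ Rset f) by
    ext n
    exact h N n (by omega)
  intro d
  induction d with
  | zero =>
    intro n hn
    rw [hS n, mem_Rset_iff hf]
    exact iff_of_false (fun h => h.1 (hN n (by omega))) (fun h => h.1 (hN n (by omega)))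
  | succ d ih => intro n hn; rw [hS n, mem_Rset_iff hf, ih (n + 1) (by omega)]

theorem eq_Lset_of_forall_succ_mem_iff (hf : IsFreq f) {S : Set ℕ} (h0 : 0 ∉ S)
    (hS : ∀ n, n + 1 ∈ S ↔ f (n + 1) ≠ 0 ∧ n ∉ S) : S = Lset f := by
  ext n
  induction n with
  | zero => exact iff_of_false h0 zero_notMem_Lset
  | succ n ih => rw [hS n, succ_mem_Lset_iff hf, ih]

end Spreads

theorem ite_one_zero_le {p : Prop} [Decidable p] {a : ℕ} (h : p → a ≠ 0) :
    (if p then 1 else 0) ≤ a := by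
  split_ifs with hp
  exacts [Nat.one_le_iff_ne_zero.mpr (h hp), Nat.zero_le a]

section Operators

variable {f : ℕ → ℕ}

theorem aB_of_ne_zero {n : ℕ} (hn : n ≠ 0) :
    aB f n = f n - (if n ∈ Lset f then 1 else 0) + (if n - 1 ∈ Lset f then 1 else 0) := by
  simp [aB, hn]

theorem dB_of_ne_zero {n : ℕ} (hn : n ≠ 0) :
    dB f n = f n - (if n ∈ Rset f then 1 else 0) + (if n + 1 ∈ Rset f then 1 else 0) := by
  simp [dB, hn]

theorem isFreq_aB (hf : IsFreq f) : IsFreq (aB f) := by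
  rw [isFreq_iff_eventually] at hf ⊢
  refine ⟨by simp [aB], ?_⟩
  filter_upwards [hf.2, (tendsto_sub_atTop_nat 1).eventually hf.2, eventually_ne_atTop 0]
    with n hn hn' hn0
  have : n - 1 ∉ Lset f := fun h => ne_zero_of_mem_Lset h hn'
  simp [aB_of_ne_zero hn0, hn, this]

theorem isFreq_dB (hf : IsFreq f) : IsFreq (dB f) := by
  rw [isFreq_iff_eventually] at hf ⊢
  refine ⟨by simp [dB], ?_⟩
  filter_upwards [hf.2, (tendsto_add_atTop_nat 1).eventually hf.2, eventually_ne_atTop 0]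
    with n hn hn' hn0
  have : n + 1 ∉ Rset f := fun h => ne_zero_of_mem_Rset h hn'
  simp [dB_of_ne_zero hn0, hn, this]

theorem succ_mem_Rset_aB_iff (hf : IsFreq f) {q : ℕ} : q + 1 ∈ Rset (aB f) ↔ q ∈ Lset f := by
  suffices h : (· + 1) '' Lset f = Rset (aB f) by simp [← h]
  refine eq_Rset_of_forall_mem_iff (isFreq_aB hf) fun n => ?_
  cases n with
  | zero => simp [aB]
  | succ n =>
    have hL := succ_mem_Lset_iff hf (q := n)
    simp only [Set.mem_image, add_left_inj, exists_eq_right, aB_of_ne_zero n.succ_ne_zero]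
    by_cases hn : n ∈ Lset f <;> by_cases hn1 : n + 1 ∈ Lset f <;> simp_all

theorem one_notMem_Rset_aB (hf : IsFreq f) : 1 ∉ Rset (aB f) :=
  fun h => zero_notMem_Lset ((succ_mem_Rset_aB_iff hf (q := 0)).mp h)

theorem dB_aB (hf : IsFreq f) : dB (aB f) = f := by
  funext n
  rcases Nat.eq_zero_or_pos n with rfl | hn
  · simp [dB, hf.1]
  have hR : n ∈ Rset (aB f) ↔ n - 1 ∈ Lset f := by
    rw [← succ_mem_Rset_aB_iff hf, Nat.sub_add_cancel hn]
  rw [dB_of_ne_zero hn.ne', aB_of_ne_zero hn.ne', if_congr hR rfl rfl,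
    if_congr (succ_mem_Rset_aB_iff hf) rfl rfl, Nat.add_sub_cancel,
    Nat.sub_add_cancel (ite_one_zero_le ne_zero_of_mem_Lset)]

theorem mem_Lset_dB_iff (hf : IsFreq f) (h1 : 1 ∉ Rset f) {q : ℕ} :
    q ∈ Lset (dB f) ↔ q + 1 ∈ Rset f := by
  suffices h : {q | q + 1 ∈ Rset f} = Lset (dB f) by simp [← h]
  refine eq_Lset_of_forall_succ_mem_iff (isFreq_dB hf) h1 fun n => ?_
  have hR := mem_Rset_iff hf (q := n + 1)
  simp only [Set.mem_ofPred_eq, dB_of_ne_zero n.succ_ne_zero]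
  by_cases hn : n + 1 ∈ Rset f <;> by_cases hn1 : n + 1 + 1 ∈ Rset f <;> simp_all

theorem aB_dB (hf : IsFreq f) (h1 : 1 ∉ Rset f) : aB (dB f) = f := by
  funext n
  rcases Nat.eq_zero_or_pos n with rfl | hn
  · simp [aB, hf.1]
  have hL : n - 1 ∈ Lset (dB f) ↔ n ∈ Rset f := by
    rw [mem_Lset_dB_iff hf h1, Nat.sub_add_cancel hn]
  rw [aB_of_ne_zero hn.ne', dB_of_ne_zero hn.ne', if_congr hL rfl rfl,
    if_congr (mem_Lset_dB_iff hf h1) rfl rfl, Nat.add_sub_cancel,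
    Nat.sub_add_cancel (ite_one_zero_le ne_zero_of_mem_Rset)]

end Operators

section Tail

variable {f : ℕ → ℕ}

theorem eq_of_tailF_eq {g : ℕ → ℕ} (h0 : f 0 = g 0) (h1 : f 1 = g 1)
    (h : tailF f = tailF g) : f = g := by
  funext n
  match n with
  | 0 => exact h0
  | 1 => exact h1
  | m + 2 => simpa [tailF] using congrFun h (m + 1)

theorem isFreq_tailF (hf : IsFreq f) : IsFreq (tailF f) := by
  rw [isFreq_iff_eventually] at hf ⊢
  refine ⟨by simp [tailF], ?_⟩
  filter_upwards [(tendsto_add_atTop_nat 1).eventually hf.2] with n hn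
  simp [tailF, hn]

theorem isFreq_of_tailF (h0 : f 0 = 0) (h : IsFreq (tailF f)) : IsFreq f := by
  rw [isFreq_iff_eventually] at h ⊢
  refine ⟨h0, ?_⟩
  filter_upwards [(tendsto_sub_atTop_nat 1).eventually h.2, eventually_ge_atTop 2] with n hn hn2
  simpa [tailF, show n - 1 ≠ 0 by omega, Nat.sub_add_cancel (show 1 ≤ n by omega)] using hn

theorem mem_Rset_tailF_iff (hf : IsFreq f) {q : ℕ} (hq : q ≠ 0) :
    q ∈ Rset (tailF f) ↔ q + 1 ∈ Rset f := by
  suffices h : {q | q ≠ 0 ∧ q + 1 ∈ Rset f} = Rset (tailF f) by simp [← h, hq]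
  refine eq_Rset_of_forall_mem_iff (isFreq_tailF hf) fun n => ?_
  rcases eq_or_ne n 0 with rfl | hn
  · simp [tailF]
  · simp [tailF, hn, mem_Rset_iff hf (q := n + 1)]

theorem tailF_dB (hf : IsFreq f) : tailF (dB f) = dB (tailF f) := by
  funext n
  rcases eq_or_ne n 0 with rfl | hn
  · simp [tailF, dB]
  · rw [dB_of_ne_zero hn, mem_Rset_tailF_iff hf hn, mem_Rset_tailF_iff hf n.succ_ne_zero]
    simp [tailF, hn, dB_of_ne_zero]

theorem tailF_bB : tailF (bB f) = aB (tailF f) := by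
  funext n
  rcases eq_or_ne n 0 with rfl | hn
  · simp [tailF, aB]
  · simp [tailF, bB, hn]

theorem isFreq_bB (hf : IsFreq f) : IsFreq (bB f) :=
  isFreq_of_tailF (by simp [bB]) (tailF_bB ▸ isFreq_aB (isFreq_tailF hf))

theorem two_notMem_Rset_bB (hf : IsFreq f) : 2 ∉ Rset (bB f) := by
  rw [mem_Rset_tailF_iff (isFreq_bB hf) one_ne_zero |>.symm, tailF_bB]
  exact one_notMem_Rset_aB (isFreq_tailF hf)

theorem one_mem_Rset_bB (hf : IsFreq f) : 1 ∈ Rset (bB f) :=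
  (mem_Rset_iff (isFreq_bB hf)).mpr ⟨by simp [bB], two_notMem_Rset_bB hf⟩

theorem dB_bB (hf : IsFreq f) : dB (bB f) = f := by
  refine eq_of_tailF_eq (by simp [dB, hf.1]) ?_ ?_
  · rw [dB_of_ne_zero one_ne_zero, if_pos (one_mem_Rset_bB hf), if_neg (two_notMem_Rset_bB hf)]
    simp [bB]
  · rw [tailF_dB (isFreq_bB hf), tailF_bB, dB_aB (isFreq_tailF hf)]

theorem bB_dB (hf : IsFreq f) (h1 : 1 ∈ Rset f) : bB (dB f) = f := by
  have h2 : 2 ∉ Rset f := ((mem_Rset_iff hf).mp h1).2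
  refine eq_of_tailF_eq (by simp [bB, hf.1]) ?_ ?_
  · rw [show bB (dB f) 1 = dB f 1 + 1 by simp [bB], dB_of_ne_zero one_ne_zero, if_pos h1,
      if_neg h2]
    have := ne_zero_of_mem_Rset h1
    omega
  · rw [tailF_bB, tailF_dB hf, aB_dB (isFreq_tailF hf)]
    rwa [mem_Rset_tailF_iff hf one_ne_zero]

end Tail

/-- `∂` is two-to-one, restricting to a bijection from
`A = {f : 1 ∉ R(f)}` onto `F` with inverse `α`, and from `B = {f : 1 ∈ R(f)}`
onto `F` with inverse `β`. -/
theorem stmt2 :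
    (∀ f : ℕ → ℕ, IsFreq f → IsFreq (dB f)) ∧
    (∀ f : ℕ → ℕ, IsFreq f → IsFreq (aB f) ∧ 1 ∉ Rset (aB f) ∧ dB (aB f) = f) ∧
    (∀ f : ℕ → ℕ, IsFreq f → IsFreq (bB f) ∧ 1 ∈ Rset (bB f) ∧ dB (bB f) = f) ∧
    (∀ f : ℕ → ℕ, IsFreq f → 1 ∉ Rset f → aB (dB f) = f) ∧
    (∀ f : ℕ → ℕ, IsFreq f → 1 ∈ Rset f → bB (dB f) = f) :=
  ⟨fun _ hf => isFreq_dB hf,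
    fun _ hf => ⟨isFreq_aB hf, one_notMem_Rset_aB hf, dB_aB hf⟩,
    fun _ hf => ⟨isFreq_bB hf, one_mem_Rset_bB hf, dB_bB hf⟩,
    fun _ hf h1 => aB_dB hf h1,
    fun _ hf h1 => bB_dB hf h1⟩
end

section
/- For any f ∈ F, |∂f| = |f| − μ₂(f), where |f| = Σ i·f_i and μ₂(f) is the 2-measure (the cardinality of R(f)). -/
open scoped Classical

/-!
`∂` moves one part from `n` down to `n - 1` for every `n ∈ R(f)`; this is possible since
`R(f) ⊆ S(f)` and `0 ∉ R(f)`. Each such move lowers the size by exactly one.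
-/

open Finset Function

lemma fsize_eq_sum_range {g : ℕ → ℕ} {N : ℕ} (hg : ∀ n ≥ N, n * g n = 0) :
    fsize g = ∑ n ∈ range N, n * g n :=
  finsum_eq_sum_of_support_subset _ fun n hn => by
    by_contra hN
    exact hn (hg n (by simpa using hN))

lemma flen_eq_sum_range {g : ℕ → ℕ} {N : ℕ} (hg : ∀ n ≥ N, g n = 0) :
    flen g = ∑ n ∈ range N, g n :=
  finsum_eq_sum_of_support_subset _ fun n hn => by
    by_contra hN
    exact hn (hg n (by simpa using hN))

lemma sum_range_mul_eq_sum_range_mul_succ_add {e : ℕ → ℕ} {N : ℕ} (he0 : e 0 = 0)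
    (heN : e N = 0) :
    ∑ n ∈ range N, n * e n = ∑ n ∈ range N, n * e (n + 1) + ∑ n ∈ range N, e n := by
  have hmul := (sum_range_succ (fun n => n * e n) N).symm.trans
    (sum_range_succ' (fun n => n * e n) N)
  have hlen := (sum_range_succ e N).symm.trans (sum_range_succ' e N)
  simp only [heN, he0, mul_zero, add_zero, add_mul, one_mul, sum_add_distrib] at hmul hlen
  omega

/-- `g` arises from `h` by moving `e n` parts from `n` down to `n - 1`, for every `n`. -/
theorem fsize_add_flen_of_shift {g h e : ℕ → ℕ} (hh : (support h).Finite)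
    (he : (support e).Finite) (he0 : e 0 = 0)
    (hstep : ∀ n, n ≠ 0 → g n + e n = h n + e (n + 1)) :
    fsize g + flen e = fsize h := by
  obtain ⟨N, hN⟩ := (hh.union he).bddAbove
  have hvanish : ∀ n > N, h n = 0 ∧ e n = 0 := fun n hn => by
    by_contra hne
    have := hN (show n ∈ support h ∪ support e by grind [mem_support])
    omega
  have hmul : ∀ n, n * g n + n * e n = n * h n + n * e (n + 1) := fun n => by
    rcases eq_or_ne n 0 with rfl | hn
    · simp
    · rw [← mul_add, hstep n hn, mul_add]
  have hg : ∀ n ≥ N + 1, n * g n = 0 := fun n hn => by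
    have := hmul n
    grind
  rw [fsize_eq_sum_range hg, fsize_eq_sum_range (N := N + 1) (by grind),
    flen_eq_sum_range (N := N + 1) (by grind)]
  have hsum := sum_congr rfl fun n (_ : n ∈ range (N + 1)) => hmul n
  rw [sum_add_distrib, sum_add_distrib,
    sum_range_mul_eq_sum_range_mul_succ_add he0 (hvanish _ (by omega)).2] at hsum
  omega

lemma Rset_subset_suppF (f : ℕ → ℕ) : Rset f ⊆ suppF f := by
  rintro q ⟨i, j, ⟨hi, -, hne, -⟩, hiq, hqj, -⟩
  exact ⟨hi.trans hiq, hne q hiq hqj⟩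

lemma flen_indicator_one (s : Set ℕ) : flen (s.indicator 1) = s.ncard := by
  rw [flen, ← finsum_mem_def]
  simp only [Pi.one_apply, finsum_one]

lemma dB_add_indicator_Rset (f : ℕ → ℕ) {n : ℕ} (hn : n ≠ 0) :
    dB f n + (Rset f).indicator 1 n = f n + (Rset f).indicator 1 (n + 1) := by
  have hle : (if n ∈ Rset f then 1 else 0) ≤ f n := by
    split_ifs with hR
    · exact Nat.one_le_iff_ne_zero.2 (Rset_subset_suppF f hR).2
    · exact Nat.zero_le _
  simp only [dB, if_neg hn, Set.indicator_apply, Pi.one_apply] at hle ⊢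
  omega

/-- `|∂f| = |f| - μ₂(f)`, where `μ₂(f) = |R(f)|`. -/
theorem stmt6 (f : ℕ → ℕ) (hf : IsFreq f) :
    fsize (dB f) = fsize f - mu2 f := by
  have hR : Rset f ⊆ support f := fun q hq => (Rset_subset_suppF f hq).2
  have hR0 : 0 ∉ Rset f := fun h => by simpa using (Rset_subset_suppF f h).1
  have key := fsize_add_flen_of_shift hf.2
    (hf.2.subset (Set.support_indicator_subset.trans hR))
    (Set.indicator_of_notMem hR0 _) fun n hn => dB_add_indicator_Rset f hn
  rw [flen_indicator_one] at key
  exact Nat.eq_sub_of_add_eq key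
end
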